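/- arXiv:2009.06747 — 2 statements merged into one kernel-verified Lean document; each statement's English description precedes it below -/
import Mathlib

section
/- Let f_i : ℝ^d → ℝ, i = 1,...,n, be convex differentiable functions whose sum F = Σ f_i is strongly convex with unique minimizer x*. Let L be the Laplacian of a connected undirected graph on n vertices and 𝐋 = L ⊗ I_d. Then the point (𝐱*, 𝐲*) with 𝐱* = 𝟙_n ⊗ x* and 𝐲* = −(∇f_1(x*),...,∇f_n(x*)) is the unique point satisfying: (i) ∇f(𝐱*) + 𝐋𝐱* + 𝐲* = 0, (ii) 𝐋𝐱* = 0, and (iii) (𝟙_n ⊗ I_d)ᵀ 𝐲* = 0. -/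
open RealInnerProductSpace

/-!
On a connected graph the kernel of `L ⊗ I_d` consists of the consensus vectors `𝟙ₙ ⊗ c`, so
conditions (ii) and (i) force `𝐱 = 𝟙ₙ ⊗ c` and `𝐲 = -∇f(𝐱)`, and then (iii) says `∇F(c) = 0`.
Strong convexity turns `∇F(c) = 0` into `F(x*) ≥ F(c) + μ/2 ‖x* - c‖²`, so minimality of `x*`
gives `c = x*`. Conversely `∇F(x*) = 0` by first-order optimality, and `L 𝟙ₙ = 0`.
-/

section Gradient

variable {E ι : Type*} [NormedAddCommGroup E] [InnerProductSpace ℝ E] [CompleteSpace E]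

theorem HasGradientAt.fun_sum {f : ι → E → ℝ} {f' : ι → E} {x : E} {s : Finset ι}
    (h : ∀ i ∈ s, HasGradientAt (f i) (f' i) x) :
    HasGradientAt (fun y => ∑ i ∈ s, f i y) (∑ i ∈ s, f' i) x := by
  rw [hasGradientAt_iff_hasFDerivAt, map_sum]
  exact HasFDerivAt.fun_sum fun i hi => (h i hi).hasFDerivAt

theorem IsLocalMin.hasGradientAt_eq_zero {f : E → ℝ} {f' : E} {x : E} (h : IsLocalMin f x)
    (hf : HasGradientAt f f' x) : f' = 0 :=
  (InnerProductSpace.toDual ℝ E).map_eq_zero_iff.mp (h.hasFDerivAt_eq_zero hf.hasFDerivAt)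

end Gradient

theorem eq_of_strongConvex_of_gradient_eq_zero {E : Type*} [NormedAddCommGroup E]
    [InnerProductSpace ℝ E] {F : E → ℝ} {g : E → E} {μ : ℝ} (hμ : 0 < μ)
    (hsc : ∀ x y, F y ≥ F x + ⟪g x, y - x⟫ + (μ / 2) * ‖y - x‖ ^ 2)
    {c x₀ : E} (hc : g c = 0) (hmin : ∀ y, F x₀ ≤ F y) : c = x₀ := by
  have hle : (μ / 2) * ‖x₀ - c‖ ^ 2 ≤ 0 := by
    have := hsc c x₀
    rw [hc, inner_zero_left] at this
    linarith [hmin c]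
  have : ‖x₀ - c‖ ^ 2 = 0 :=
    le_antisymm (nonpos_of_mul_nonpos_right hle (by positivity)) (by positivity)
  simpa [sub_eq_zero, eq_comm] using this

namespace SimpleGraph

variable {V E : Type*} [Fintype V] [DecidableEq V] (G : SimpleGraph V) [DecidableRel G.Adj]
  [AddCommGroup E] [Module ℝ E]

theorem sum_lapMatrix_smul_const (i : V) (c : E) : ∑ j, G.lapMatrix ℝ i j • c = 0 := by
  have := congrFun (G.lapMatrix_mulVec_const_eq_zero (R := ℝ)) i
  simp only [Matrix.mulVec, dotProduct, mul_one, Pi.zero_apply] at this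
  rw [← Finset.sum_smul, this, zero_smul]

theorem sum_lapMatrix_smul_eq_zero_iff (hG : G.Connected) (x : V → E) :
    (∀ i, ∑ j, G.lapMatrix ℝ i j • x j = 0) ↔ ∃ c, x = fun _ => c := by
  refine ⟨fun hx => ?_, fun ⟨c, hc⟩ i => hc ▸ G.sum_lapMatrix_smul_const i c⟩
  obtain ⟨i₀⟩ := hG.nonempty
  refine ⟨x i₀, funext fun i => sub_eq_zero.mp ?_⟩
  -- reduce to the scalar Laplacian by testing against every linear functional
  refine (Module.forall_dual_apply_eq_zero_iff ℝ _).mp fun φ => ?_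
  have hφ : (G.lapMatrix ℝ).mulVec (φ ∘ x) = 0 := funext fun i => by
    simpa [Matrix.mulVec, dotProduct] using congrArg φ (hx i)
  rw [map_sub, sub_eq_zero]
  exact lapMatrix_mulVec_eq_zero_iff_forall_reachable G |>.mp hφ i i₀ (hG i i₀)

end SimpleGraph

theorem equilibrium_unique_general (n d : ℕ) (G : SimpleGraph (Fin n)) [DecidableRel G.Adj]
    (hconn : G.Connected)
    (f : Fin n → EuclideanSpace ℝ (Fin d) → ℝ)
    (f' : Fin n → EuclideanSpace ℝ (Fin d) → EuclideanSpace ℝ (Fin d))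
    (hdiff : ∀ i x, HasGradientAt (f i) (f' i x) x)
    (μ : ℝ) (hμ : 0 < μ)
    (hsc : ∀ x y, (∑ i, f i y) ≥ (∑ i, f i x) + ⟪∑ i, f' i x, y - x⟫ + (μ / 2) * ‖y - x‖ ^ 2)
    (xstar : EuclideanSpace ℝ (Fin d)) (hmin : ∀ y, (∑ i, f i xstar) ≤ ∑ i, f i y) :
    ∀ (x y : Fin n → EuclideanSpace ℝ (Fin d)),
      ((∀ i, f' i (x i) + (∑ j, G.lapMatrix ℝ i j • x j) + y i = 0) ∧
       (∀ i, (∑ j, G.lapMatrix ℝ i j • x j) = 0) ∧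
       (∑ i, y i) = 0)
      ↔ (x = fun _ => xstar) ∧ (y = fun i => -(f' i xstar)) := by
  intro x y
  constructor
  · rintro ⟨hstat, hcons, hdual⟩
    obtain ⟨c, rfl⟩ := (G.sum_lapMatrix_smul_eq_zero_iff hconn x).mp hcons
    have hy : y = fun i => -(f' i c) := funext fun i =>
      eq_neg_of_add_eq_zero_right (by simpa [hcons i] using hstat i)
    have hc : ∑ i, f' i c = 0 := by
      simpa [hy, Finset.sum_neg_distrib] using hdual
    obtain rfl := eq_of_strongConvex_of_gradient_eq_zero hμ hsc hc hmin
    exact ⟨rfl, hy⟩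
  · rintro ⟨rfl, rfl⟩
    have hgrad : ∑ i, f' i xstar = 0 :=
      IsLocalMin.hasGradientAt_eq_zero (Filter.Eventually.of_forall hmin)
        (HasGradientAt.fun_sum fun i _ => hdiff i xstar)
    refine ⟨fun i => ?_, (G.sum_lapMatrix_smul_const · xstar), ?_⟩
    · rw [G.sum_lapMatrix_smul_const, add_zero, add_neg_cancel]
    · rw [Finset.sum_neg_distrib, hgrad, neg_zero]

/-- Let `f i` be convex differentiable with gradients `f' i`, whose sum `F` is strongly
convex with unique minimizer `x*`. Let `L` be the Laplacian of a connected undirected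
graph on `n` vertices, acting blockwise on `(ℝ^d)^n` (i.e. `𝐋 = L ⊗ I_d`). Then
`𝐱* = 𝟙ₙ ⊗ x*`, `𝐲* = −(∇f₁(x*),…,∇fₙ(x*))` is the unique point satisfying
(i) `∇f(𝐱*) + 𝐋𝐱* + 𝐲* = 0`, (ii) `𝐋𝐱* = 0`, (iii) `(𝟙ₙ ⊗ I_d)ᵀ 𝐲* = 0`. -/
theorem equilibrium_unique (n d : ℕ) (G : SimpleGraph (Fin n)) [DecidableRel G.Adj]
    (hconn : G.Connected)
    (f : Fin n → EuclideanSpace ℝ (Fin d) → ℝ)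
    (f' : Fin n → EuclideanSpace ℝ (Fin d) → EuclideanSpace ℝ (Fin d))
    (hdiff : ∀ i x, HasGradientAt (f i) (f' i x) x)
    (hconv : ∀ i, ConvexOn ℝ Set.univ (f i))
    (μ : ℝ) (hμ : 0 < μ)
    (hsc : ∀ x y, (∑ i, f i y) ≥ (∑ i, f i x) + ⟪∑ i, f' i x, y - x⟫ + (μ / 2) * ‖y - x‖ ^ 2)
    (xstar : EuclideanSpace ℝ (Fin d)) (hmin : ∀ y, (∑ i, f i xstar) ≤ ∑ i, f i y) :
    ∀ (x y : Fin n → EuclideanSpace ℝ (Fin d)),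
      ((∀ i, f' i (x i) + (∑ j, G.lapMatrix ℝ i j • x j) + y i = 0) ∧
       (∀ i, (∑ j, G.lapMatrix ℝ i j • x j) = 0) ∧
       (∑ i, y i) = 0)
      ↔ (x = fun _ => xstar) ∧ (y = fun i => -(f' i xstar)) :=
  equilibrium_unique_general n d G hconn f f' hdiff μ hμ hsc xstar hmin
end

section
/- Consider the ODE system ż = −(∇f(x̃ + 𝐱*) − ∇f(𝐱*)) − 𝐋x̃ − S w̃, ẇ = S x̃, with x̃ = ∇φ*(z) − 𝐱*. The function V(z̃, w̃) = Σ_{i=1}^n D_{φ*}(z_i, z*) + (1/2)‖w̃‖² has time derivative V̇ = −⟨x̃, ∇f(x̃ + 𝐱*) − ∇f(𝐱*)⟩ − x̃ᵀ𝐋x̃ along trajectories. -/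
open RealInnerProductSpace

/-!
The Bregman part of `V` changes at rate `⟪∇φ*(zᵢ) − ∇φ*(z*), żᵢ⟫ = ⟪x̃ᵢ, żᵢ⟫` and the quadratic part at
rate `⟪w̃, ẇ̃⟫ = ⟪w̃, S x̃⟫`. Since `S` is symmetric, `⟪w̃, S x̃⟫ = ⟪x̃, S w̃⟫`, so the coupling term coming
from `żᵢ` cancels and only the gradient and Laplacian terms survive.
-/

section Calculus

variable {E : Type*} [NormedAddCommGroup E] [InnerProductSpace ℝ E]

theorem HasGradientAt.comp_hasDerivAt [CompleteSpace E] {φ : E → ℝ} {g : E} {γ : ℝ → E} {v : E}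
    {t : ℝ} (hφ : HasGradientAt φ g (γ t)) (hγ : HasDerivAt γ v t) :
    HasDerivAt (fun s => φ (γ s)) ⟪g, v⟫ t := by
  simpa only [Function.comp_def, InnerProductSpace.toDual_apply_apply] using
    hφ.hasFDerivAt.comp_hasDerivAt t hγ

def bregmanDiv (φ : E → ℝ) (φ' : E → E) (z z₀ : E) : ℝ :=
  φ z - φ z₀ - ⟪φ' z₀, z - z₀⟫

theorem hasDerivAt_bregmanDiv [CompleteSpace E] {φ : E → ℝ} {φ' : E → E} {γ : ℝ → E} {v : E}
    {t : ℝ} (z₀ : E) (hφ : HasGradientAt φ (φ' (γ t)) (γ t)) (hγ : HasDerivAt γ v t) :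
    HasDerivAt (fun s => bregmanDiv φ φ' (γ s) z₀) ⟪φ' (γ t) - φ' z₀, v⟫ t := by
  have hlin : HasDerivAt (fun s => ⟪φ' z₀, γ s - z₀⟫) ⟪φ' z₀, v⟫ t := by
    simpa using (hasDerivAt_const t (φ' z₀)).inner ℝ (hγ.sub_const z₀)
  rw [inner_sub_left]
  exact ((hφ.comp_hasDerivAt hγ).sub_const (φ z₀)).sub hlin

end Calculus

theorem Matrix.IsSymm.sum_inner_sum_smul_comm {ι E : Type*} [Fintype ι] [NormedAddCommGroup E]
    [InnerProductSpace ℝ E] {S : Matrix ι ι ℝ} (hS : S.IsSymm) (x w : ι → E) :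
    ∑ i, ⟪x i, ∑ j, S i j • w j⟫ = ∑ i, ⟪w i, ∑ j, S i j • x j⟫ := by
  simp only [inner_sum, real_inner_smul_right]
  rw [Finset.sum_comm]
  refine Finset.sum_congr rfl fun j _ => Finset.sum_congr rfl fun i _ => ?_
  rw [real_inner_comm, hS.apply]

theorem lyapunov_derivative_general (n d : ℕ)
    (φs : EuclideanSpace ℝ (Fin d) → ℝ)
    (φs' : EuclideanSpace ℝ (Fin d) → EuclideanSpace ℝ (Fin d))
    (hdiffs : ∀ z, HasGradientAt φs (φs' z) z)
    (f' : Fin n → EuclideanSpace ℝ (Fin d) → EuclideanSpace ℝ (Fin d))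
    (L S : Matrix (Fin n) (Fin n) ℝ) (hSsymm : S.IsSymm)
    (xstar zstar : EuclideanSpace ℝ (Fin d)) (hzstar : φs' zstar = xstar)
    (z w : ℝ → Fin n → EuclideanSpace ℝ (Fin d))
    (xt : ℝ → Fin n → EuclideanSpace ℝ (Fin d))
    (hxt : ∀ t i, xt t i = φs' (z t i) - xstar)
    (hz : ∀ t i, HasDerivAt (fun s => z s i)
      (-(f' i (xt t i + xstar) - f' i xstar) - (∑ j, L i j • xt t j)
        - (∑ j, S i j • w t j)) t)
    (hw : ∀ t i, HasDerivAt (fun s => w s i) (∑ j, S i j • xt t j) t) :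
    ∀ t : ℝ, HasDerivAt
      (fun s => (∑ i, (φs (z s i) - φs zstar - ⟪φs' zstar, z s i - zstar⟫))
        + (1 / 2) * ∑ i, ‖w s i‖ ^ 2)
      (-(∑ i, ⟪xt t i, f' i (xt t i + xstar) - f' i xstar⟫)
        - ∑ i, ⟪xt t i, ∑ j, L i j • xt t j⟫) t := by
  intro t
  have hbregman := HasDerivAt.fun_sum fun i (_ : i ∈ Finset.univ) =>
    hasDerivAt_bregmanDiv zstar (hdiffs _) (hz t i)
  have hquad := (HasDerivAt.fun_sum fun i (_ : i ∈ Finset.univ) => (hw t i).norm_sq).const_mul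
    (1 / 2 : ℝ)
  refine (hbregman.add hquad).congr_deriv ?_
  simp only [hzstar, ← hxt, inner_sub_right, inner_neg_right, Finset.sum_sub_distrib,
    Finset.sum_neg_distrib, ← Finset.mul_sum, ← hSsymm.sum_inner_sum_smul_comm (xt t) (w t)]
  ring

/-- Along trajectories of the system
`żᵢ = −(∇fᵢ(x̃ᵢ + x*) − ∇fᵢ(x*)) − (𝐋x̃)ᵢ − (S w̃)ᵢ`, `ẇ̃ᵢ = (S x̃)ᵢ`,
with `x̃ᵢ = ∇φ*(zᵢ) − x*`, the Lyapunov function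
`V(z̃, w̃) = Σᵢ D_{φ*}(zᵢ, z*) + (1/2)‖w̃‖²` has time derivative
`V̇ = −⟨x̃, ∇f(x̃ + 𝐱*) − ∇f(𝐱*)⟩ − x̃ᵀ𝐋x̃`. -/
theorem lyapunov_derivative (n d : ℕ)
    (φs : EuclideanSpace ℝ (Fin d) → ℝ)
    (φs' : EuclideanSpace ℝ (Fin d) → EuclideanSpace ℝ (Fin d))
    (hdiffs : ∀ z, HasGradientAt φs (φs' z) z)
    (f : Fin n → EuclideanSpace ℝ (Fin d) → ℝ)
    (f' : Fin n → EuclideanSpace ℝ (Fin d) → EuclideanSpace ℝ (Fin d))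
    (hdiff : ∀ i x, HasGradientAt (f i) (f' i x) x)
    (hconv : ∀ i, ConvexOn ℝ Set.univ (f i))
    (L S : Matrix (Fin n) (Fin n) ℝ) (hLsymm : L.IsSymm) (hSsymm : S.IsSymm)
    (xstar zstar : EuclideanSpace ℝ (Fin d)) (hzstar : φs' zstar = xstar)
    (z w : ℝ → Fin n → EuclideanSpace ℝ (Fin d))
    (xt : ℝ → Fin n → EuclideanSpace ℝ (Fin d))
    (hxt : ∀ t i, xt t i = φs' (z t i) - xstar)
    (hz : ∀ t i, HasDerivAt (fun s => z s i)
      (-(f' i (xt t i + xstar) - f' i xstar) - (∑ j, L i j • xt t j)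
        - (∑ j, S i j • w t j)) t)
    (hw : ∀ t i, HasDerivAt (fun s => w s i) (∑ j, S i j • xt t j) t) :
    ∀ t : ℝ, HasDerivAt
      (fun s => (∑ i, (φs (z s i) - φs zstar - ⟪φs' zstar, z s i - zstar⟫))
        + (1 / 2) * ∑ i, ‖w s i‖ ^ 2)
      (-(∑ i, ⟪xt t i, f' i (xt t i + xstar) - f' i xstar⟫)
        - ∑ i, ⟪xt t i, ∑ j, L i j • xt t j⟫) t :=
  lyapunov_derivative_general n d φs φs' hdiffs f' L S hSsymm xstar zstar hzstar z w xt hxt hz hw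
end
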